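/- With the notation of the CB-NOMA model, for every threshold t ∈ (0,1) the conditional average minimal transmit power is finite: ∫_t^1 ∫_0^∞ ∫_0^∞ P_min(x,y,z)·g(x)·g(y)·b_t(z) dx dy dz < ∞ (equivalently, P_min is integrable with respect to the product of the densities g(x), g(y) and b_t(z)). -/

import Mathlib

/-!
Since `min a b` is one of `a`, `b`, and `z ≥ t > 0` on the domain, `|P_min(x,y,z)|` is bounded by
`a / x + c / y` for constants `a`, `c`. For `M ≥ 2` both `g(x)` and `g(x) / x ∝ x^(M-2) e^(-x)`
are integrable on `(0,∞)`, and `b_t` is continuous on `[t,1]`, so the integrand is dominated by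
a sum of two products of integrable functions of one variable.
-/

open MeasureTheory Set

namespace MeasureTheory

variable {α β γ L : Type*} [MeasurableSpace α] [MeasurableSpace β] [MeasurableSpace γ]
  [NormedRing L] {μ : Measure α} {ν : Measure β} {ρ : Measure γ} [SFinite μ] [SFinite ν]

theorem IntegrableOn.mul_prod {f : α → L} {g : β → L} {s : Set α} {t : Set β}
    (hf : IntegrableOn f s μ) (hg : IntegrableOn g t ν) :
    IntegrableOn (fun p : α × β => f p.1 * g p.2) (s ×ˢ t) (μ.prod ν) := by
  rw [IntegrableOn, ← Measure.prod_restrict]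
  exact Integrable.mul_prod hf hg

theorem IntegrableOn.mul_prod_prod [SFinite ρ] {f : α → L} {g : β → L} {h : γ → L}
    {s : Set α} {t : Set β} {u : Set γ} (hf : IntegrableOn f s μ) (hg : IntegrableOn g t ν)
    (hh : IntegrableOn h u ρ) :
    IntegrableOn (fun p : α × β × γ => f p.1 * g p.2.1 * h p.2.2) (s ×ˢ t ×ˢ u)
      (μ.prod (ν.prod ρ)) := by
  simp only [mul_assoc]
  exact hf.mul_prod (hg.mul_prod hh)

end MeasureTheory

section GammaIntegrals

open Real

theorem integrableOn_pow_mul_exp_neg (n : ℕ) :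
    IntegrableOn (fun x : ℝ => x ^ n * exp (-x)) (Ioi 0) := by
  refine (GammaIntegral_convergent (s := n + 1) (by positivity)).congr_fun
    (fun x _ => ?_) measurableSet_Ioi
  simp only [add_sub_cancel_right, rpow_natCast, mul_comm]

theorem integrableOn_pow_mul_exp_neg_div {n : ℕ} (hn : n ≠ 0) :
    IntegrableOn (fun x : ℝ => x ^ n * exp (-x) / x) (Ioi 0) := by
  obtain ⟨m, rfl⟩ := Nat.exists_eq_succ_of_ne_zero hn
  exact (integrableOn_pow_mul_exp_neg m).congr_fun
    (fun x (hx : 0 < x) => by rw [pow_succ]; field_simp) measurableSet_Ioi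

end GammaIntegrals

theorem abs_div_min_le (a b c : ℝ) : |c / min a b| ≤ |c / a| + |c / b| := by
  rcases min_choice a b with h | h <;> rw [h] <;> simp

theorem abs_div_mul_le_of_le {c β y z t : ℝ} (hy : 0 < y) (ht : 0 < t) (hz : t ≤ z) :
    |c / (β * y * z)| ≤ |c| / |β| / t / y := by
  rw [abs_div, abs_mul, abs_mul, abs_of_pos hy, abs_of_pos (ht.trans_le hz), mul_assoc,
    ← div_div, div_div _ t]
  exact div_le_div_of_nonneg_left (by positivity) (by positivity) (by nlinarith)

noncomputable def minPower (β1 β2 γ1 γ2 x y z : ℝ) : ℝ :=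
  γ1 * (1 + γ2) / (β1 * x) + γ2 / min (β1 * x) (β2 * y * z)

theorem abs_minPower_le {β1 β2 γ1 γ2 x y z t : ℝ} (hx : 0 < x) (hy : 0 < y) (ht : 0 < t)
    (hz : t ≤ z) :
    |minPower β1 β2 γ1 γ2 x y z| ≤ (|γ1 * (1 + γ2)| + |γ2|) / |β1| / x + |γ2| / |β2| / t / y := by
  have hdiv (c : ℝ) : |c / (β1 * x)| = |c| / |β1| / x := by
    rw [abs_div, abs_mul, abs_of_pos hx, div_div]
  calc _ ≤ |γ1 * (1 + γ2) / (β1 * x)| + (|γ2 / (β1 * x)| + |γ2 / (β2 * y * z)|) :=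
        (abs_add_le _ _).trans (by gcongr; exact abs_div_min_le _ _ _)
    _ ≤ _ := by
      rw [hdiv, hdiv, add_div, add_div, ← add_assoc]
      gcongr
      exact abs_div_mul_le_of_le hy ht hz

open Nat in
noncomputable def gammaDensity (M : ℕ) (x : ℝ) : ℝ := x ^ (M - 1) * Real.exp (-x) / (M - 1)!

theorem gammaDensity_nonneg (M : ℕ) {x : ℝ} (hx : 0 ≤ x) : 0 ≤ gammaDensity M x := by
  unfold gammaDensity
  positivity

theorem integrableOn_gammaDensity (M : ℕ) : IntegrableOn (gammaDensity M) (Ioi 0) :=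
  (integrableOn_pow_mul_exp_neg _).div_const _

theorem integrableOn_gammaDensity_div {M : ℕ} (hM : 2 ≤ M) :
    IntegrableOn (fun x => gammaDensity M x / x) (Ioi 0) :=
  IntegrableOn.congr_fun ((integrableOn_pow_mul_exp_neg_div (by omega)).div_const _)
    (fun _ _ => div_right_comm _ _ _) measurableSet_Ioi

theorem cbnoma_avg_power_finite_general (M : ℕ) (hM : 2 ≤ M)
    (β1 β2 γ1 γ2 t : ℝ) (ht0 : 0 < t) :
    IntegrableOn
      (fun p : ℝ × ℝ × ℝ =>
        (γ1 * (1 + γ2) / (β1 * p.1) + γ2 / min (β1 * p.1) (β2 * p.2.1 * p.2.2))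
          * (p.1 ^ (M - 1) * Real.exp (-p.1) / (Nat.factorial (M - 1) : ℝ))
          * (p.2.1 ^ (M - 1) * Real.exp (-p.2.1) / (Nat.factorial (M - 1) : ℝ))
          * (((M : ℝ) - 1) * (1 - p.2.2) ^ (M - 2) / (1 - t) ^ (M - 1)))
      (Ioi (0 : ℝ) ×ˢ Ioi (0 : ℝ) ×ˢ Icc t 1) := by
  set b : ℝ → ℝ := fun z => ((M : ℝ) - 1) * (1 - z) ^ (M - 2) / (1 - t) ^ (M - 1)
  change IntegrableOn (fun p : ℝ × ℝ × ℝ => minPower β1 β2 γ1 γ2 p.1 p.2.1 p.2.2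
    * gammaDensity M p.1 * gammaDensity M p.2.1 * b p.2.2) _
  have hb : IntegrableOn (fun z => |b z|) (Icc t 1) :=
    (by fun_prop : Continuous b).integrableOn_Icc.abs
  have hg := integrableOn_gammaDensity M
  have hg_div := integrableOn_gammaDensity_div hM
  refine Integrable.mono' (((hg_div.mul_prod_prod hg hb).const_mul
    ((|γ1 * (1 + γ2)| + |γ2|) / |β1|)).add
    ((hg.mul_prod_prod hg_div hb).const_mul (|γ2| / |β2| / t)))
    (Measurable.aestronglyMeasurable (by unfold minPower gammaDensity; fun_prop)) ?_
  filter_upwards [ae_restrict_mem (by measurability)] with ⟨x, y, z⟩ hp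
  obtain ⟨hx : 0 < x, hy : 0 < y, hz : t ≤ z, -⟩ := hp
  have hgx := gammaDensity_nonneg M hx.le
  have hgy := gammaDensity_nonneg M hy.le
  rw [Real.norm_eq_abs, abs_mul, abs_mul, abs_mul, abs_of_nonneg hgx, abs_of_nonneg hgy]
  grw [abs_minPower_le hx hy ht0 hz]
  refine le_of_eq ?_
  simp only [Pi.add_apply]
  ring

/-- For every threshold `t ∈ (0,1)`, the minimal transmit power `P_min`
weighted by the product of the densities `g(x)`, `g(y)`, `b_t(z)` is integrable
over `(0,∞) × (0,∞) × [t,1]`, i.e. the conditional average minimal transmit power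
is finite. -/
theorem cbnoma_avg_power_finite (M : ℕ) (hM : 2 ≤ M)
    (β1 β2 γ1 γ2 t : ℝ) (hβ : β2 ≤ β1) (hβ2 : 0 < β2)
    (hγ1 : 0 < γ1) (hγ2 : 0 < γ2) (ht0 : 0 < t) (ht1 : t < 1) :
    IntegrableOn
      (fun p : ℝ × ℝ × ℝ =>
        (γ1 * (1 + γ2) / (β1 * p.1) + γ2 / min (β1 * p.1) (β2 * p.2.1 * p.2.2))
          * (p.1 ^ (M - 1) * Real.exp (-p.1) / (Nat.factorial (M - 1) : ℝ))
          * (p.2.1 ^ (M - 1) * Real.exp (-p.2.1) / (Nat.factorial (M - 1) : ℝ))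
          * (((M : ℝ) - 1) * (1 - p.2.2) ^ (M - 2) / (1 - t) ^ (M - 1)))
      (Ioi (0 : ℝ) ×ˢ Ioi (0 : ℝ) ×ˢ Icc t 1) :=
  cbnoma_avg_power_finite_general M hM β1 β2 γ1 γ2 t ht0
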